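/- Let (X, μ) be a probability space, S an ergodic invertible measure-preserving transformation of (X, μ), and f : X → ℤ an integrable function with ∫ f dμ = 0. Then the cylindrical cascade C : X × ℤ → X × ℤ defined by C(x, z) = (S x, z + f(x)), which preserves the (σ-finite) measure μ × # where # is counting measure on ℤ, is conservative: for every measurable set E ⊆ X × ℤ of positive μ × # measure, (μ × #)-almost every point of E returns to E under some positive iterate of C. -/

import Mathlib

/-!
Atkinson's argument. Fix a fibre `A = E_z` and let `B ⊆ A` be the set of points that never come
back to `A` with a vanishing Birkhoff sum of `f`. Along one orbit, the Birkhoff sums at distinct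
visit times to `B` are then distinct integers. The maximal ergodic theorem gives, almost
everywhere, `|S_n f| ≤ δ n + O(1)` and at least `(μ B - δ) n - O(1)` visits to `B` before time `n`;
for `δ` small compared with `μ B` these cannot fit in a window of `2 δ n + O(1)` integers unless
`μ B = 0`. Since `C^[n] (x, z) = (S^[n] x, z + S_n f x)`, this is conservativity fibre by fibre.
-/

open MeasureTheory Finset

section SkewProduct

variable {X G : Type*} [AddCommMonoid G]

def skewProduct (T : X → X) (f : X → G) (p : X × G) : X × G :=
  (T p.1, p.2 + f p.1)

theorem skewProduct_iterate (T : X → X) (f : X → G) (n : ℕ) (p : X × G) :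
    (skewProduct T f)^[n] p = (T^[n] p.1, p.2 + birkhoffSum T f n p.1) := by
  induction n generalizing p with
  | zero => simp
  | succ n ih =>
    rw [Function.iterate_succ_apply, ih, skewProduct, birkhoffSum_succ', add_assoc,
      Function.iterate_succ_apply]

end SkewProduct

section BirkhoffSum

variable {X : Type*} {T : X → X}

theorem birkhoffSum_indicator_one {R : Type*} [AddCommMonoidWithOne R] (T : X → X) (B : Set X)
    [DecidablePred (· ∈ B)] (n : ℕ) (x : X) :
    birkhoffSum T (B.indicator (1 : X → R)) n x = #{k ∈ range n | T^[k] x ∈ B} := by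
  simp [birkhoffSum, Set.indicator_apply, Finset.sum_boole]

theorem partialSups_birkhoffSum_le (T : X → X) (g : X → ℝ) (N : ℕ) (x : X) :
    partialSups (birkhoffSum T g) N x ≤ 0 ⊔ (g x + partialSups (birkhoffSum T g) N (T x)) := by
  rw [Pi.partialSups_apply]
  refine partialSups_le _ _ _ fun k hk => ?_
  cases k with
  | zero => simp
  | succ k =>
    rw [birkhoffSum_succ']
    exact le_sup_of_le_right <| by
      gcongr
      exact le_partialSups_of_le (birkhoffSum T g) (by omega : k ≤ N) (T x)

theorem partialSups_birkhoffSum_nonneg (T : X → X) (g : X → ℝ) (N : ℕ) (x : X) :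
    0 ≤ partialSups (birkhoffSum T g) N x := by
  simpa using le_partialSups_of_le (birkhoffSum T g) (Nat.zero_le N) x

theorem bddAbove_range_birkhoffSum_apply_iff (T : X → X) (g : X → ℝ) (x : X) :
    BddAbove (Set.range fun n => birkhoffSum T g n (T x)) ↔
      BddAbove (Set.range fun n => birkhoffSum T g n x) := by
  constructor
  · rintro ⟨M, hM⟩
    refine ⟨0 ⊔ (g x + M), ?_⟩
    rintro _ ⟨n, rfl⟩
    cases n with
    | zero => simp
    | succ n =>
      show birkhoffSum T g (n + 1) x ≤ _
      rw [birkhoffSum_succ']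
      exact le_sup_of_le_right (by gcongr; exact hM ⟨n, rfl⟩)
  · rintro ⟨M, hM⟩
    refine ⟨M - g x, ?_⟩
    rintro _ ⟨n, rfl⟩
    have : birkhoffSum T g (n + 1) x ≤ M := hM ⟨n + 1, rfl⟩
    rw [birkhoffSum_succ'] at this
    exact le_sub_iff_add_le'.2 this

theorem injOn_birkhoffSum_of_forall_ne_zero {G : Type*} [AddCancelCommMonoid G] {f : X → G}
    {B : Set X} (hB : ∀ y ∈ B, ∀ n, 0 < n → T^[n] y ∈ B → birkhoffSum T f n y ≠ 0) (x : X) :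
    Set.InjOn (birkhoffSum T f · x) {i | T^[i] x ∈ B} := by
  intro i hi j hj (hij : birkhoffSum T f i x = birkhoffSum T f j x)
  by_contra hne
  wlog hlt : i < j generalizing i j
  · exact this hj hi hij.symm (Ne.symm hne) (by omega)
  obtain ⟨k, rfl⟩ := Nat.exists_eq_add_of_lt hlt
  refine hB _ hi (k + 1) k.succ_pos ?_ ?_
  · rwa [← Function.iterate_add_apply, add_comm (k + 1), ← add_assoc]
  · have := birkhoffSum_add T f i (k + 1) x
    rw [← add_assoc, ← hij] at this
    exact left_eq_add.1 this

theorem card_filter_iterate_mem_le {f : X → ℤ} {B : Set X} [DecidablePred (· ∈ B)]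
    (hB : ∀ y ∈ B, ∀ n, 0 < n → T^[n] y ∈ B → birkhoffSum T f n y ≠ 0) {x : X} {N R : ℕ}
    (hR : ∀ i < N, |birkhoffSum T f i x| ≤ R) :
    #{i ∈ range N | T^[i] x ∈ B} ≤ 2 * R + 1 := by
  calc #{i ∈ range N | T^[i] x ∈ B} ≤ #(Icc (-R : ℤ) R) := by
        refine card_le_card_of_injOn (birkhoffSum T f · x) (fun i hi => ?_)
          ((injOn_birkhoffSum_of_forall_ne_zero hB x).mono fun i hi => ?_)
        · rw [mem_coe, mem_filter, mem_range] at hi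
          exact mem_Icc.2 (abs_le.1 (hR i hi.1))
        · exact (mem_filter.1 hi).2
    _ = 2 * R + 1 := by rw [Int.card_Icc]; omega

end BirkhoffSum

theorem Measurable.partialSups {Y α : Type*} [MeasurableSpace Y] [MeasurableSpace α]
    [SemilatticeSup α] [MeasurableSup₂ α] {f : ℕ → Y → α} (hf : ∀ n, Measurable (f n)) (N : ℕ) :
    Measurable (partialSups f N) := by
  rw [partialSups_apply]
  exact Finset.sup'_induction _ _ (fun _ h₁ _ h₂ => h₁.sup h₂) fun n _ => hf n

theorem MeasureTheory.Integrable.partialSups {Y : Type*} [MeasurableSpace Y] {μ : Measure Y}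
    {f : ℕ → Y → ℝ} (hf : ∀ n, Integrable (f n) μ) (N : ℕ) :
    Integrable (partialSups f N) μ := by
  rw [partialSups_apply]
  exact Finset.sup'_induction (p := (Integrable · μ)) _ _ (fun _ h₁ _ h₂ => h₁.sup h₂)
    fun n _ => hf n

theorem MeasureTheory.Measure.ae_prod_of_forall_ae_of_countable {Y ι : Type*}
    [MeasurableSpace Y] [MeasurableSpace ι] [Countable ι] {μ : Measure Y} {ν : Measure ι}
    {P : Y × ι → Prop} (h : ∀ i, ∀ᵐ y ∂μ, P (y, i)) : ∀ᵐ p ∂μ.prod ν, P p := by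
  rw [ae_iff]
  refine measure_mono_null (t := ⋃ i, {y | ¬P (y, i)} ×ˢ {i}) ?_ (measure_iUnion_null fun i => ?_)
  · rintro ⟨y, i⟩ hp
    exact Set.mem_iUnion.2 ⟨i, hp, rfl⟩
  · refine nonpos_iff_eq_zero.1 ((Measure.prod_prod_le _ _).trans ?_)
    rw [ae_iff.1 (h i), zero_mul]

section MaximalErgodic

variable {X : Type*} [MeasurableSpace X] {μ : Measure X} {T : X → X}

theorem Measurable.birkhoffSum {M : Type*} [AddCommMonoid M] [MeasurableSpace M]
    [MeasurableAdd₂ M] {g : X → M} (hg : Measurable g) (hT : Measurable T) (n : ℕ) :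
    Measurable (birkhoffSum T g n) :=
  Finset.measurable_sum _ fun k _ => hg.comp (hT.iterate k)

theorem MeasureTheory.MeasurePreserving.integrable_birkhoffSum {E : Type*}
    [NormedAddCommGroup E] {g : X → E} (hT : MeasurePreserving T μ μ) (hg : Integrable g μ)
    (n : ℕ) : Integrable (birkhoffSum T g n) μ :=
  integrable_finsetSum _ fun k _ => (hT.iterate k).integrable_comp_of_integrable hg

variable {g : X → ℝ}

theorem MeasureTheory.MeasurePreserving.setIntegral_partialSups_birkhoffSum_pos_nonneg
    (hT : MeasurePreserving T μ μ) (hg : Measurable g) (hgi : Integrable g μ) (N : ℕ) :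
    0 ≤ ∫ x in {x | 0 < partialSups (birkhoffSum T g) N x}, g x ∂μ := by
  set M := partialSups (birkhoffSum T g) N
  have hMm : Measurable M := Measurable.partialSups (hg.birkhoffSum hT.measurable) N
  have hMi : Integrable M μ := Integrable.partialSups (hT.integrable_birkhoffSum hgi) N
  have hMTi : Integrable (fun x => M (T x)) μ := hT.integrable_comp_of_integrable hMi
  have hA : MeasurableSet {x | 0 < M x} := measurableSet_lt measurable_const hMm
  have hMT : ∫ x, M (T x) ∂μ = ∫ x, M x ∂μ := by
    rw [← integral_map hT.measurable.aemeasurable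
      (by rw [hT.map_eq]; exact hMi.aestronglyMeasurable), hT.map_eq]
  rw [← integral_indicator hA]
  calc 0 = ∫ x, (M x - M (T x)) ∂μ := by rw [integral_sub hMi hMTi, hMT, sub_self]
    _ ≤ ∫ x, {x | 0 < M x}.indicator g x ∂μ := by
      refine integral_mono (hMi.sub hMTi) (hgi.indicator hA) fun x => ?_
      have hMx := partialSups_birkhoffSum_le T g N x
      have hMTx := partialSups_birkhoffSum_nonneg T g N (T x)
      by_cases hx : 0 < M x
      · rw [Set.indicator_of_mem (s := {x | 0 < M x}) hx]
        have : M x ≤ g x + M (T x) := (le_sup_iff.1 hMx).resolve_left hx.not_ge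
        dsimp only
        linarith
      · rw [Set.indicator_of_notMem (s := {x | 0 < M x}) hx]
        dsimp only
        linarith [not_lt.1 hx]

theorem MeasureTheory.MeasurePreserving.setIntegral_exists_birkhoffSum_pos_nonneg
    (hT : MeasurePreserving T μ μ) (hg : Measurable g) (hgi : Integrable g μ) :
    0 ≤ ∫ x in {x | ∃ n, 0 < birkhoffSum T g n x}, g x ∂μ := by
  set A : ℕ → Set X := fun N => {x | 0 < partialSups (birkhoffSum T g) N x}
  have hAm (N : ℕ) : MeasurableSet (A N) :=
    measurableSet_lt measurable_const (.partialSups (hg.birkhoffSum hT.measurable) N)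
  have hAmono : Monotone A := fun M N hMN x hx =>
    hx.trans_le (partialSups_monotone (birkhoffSum T g) hMN x)
  have hAU : ⋃ N, A N = {x | ∃ n, 0 < birkhoffSum T g n x} := by
    ext x
    simp only [A, Set.mem_iUnion]
    constructor
    · rintro ⟨N, hN : 0 < partialSups (birkhoffSum T g) N x⟩
      rw [Pi.partialSups_apply, partialSups_apply, Finset.lt_sup'_iff] at hN
      obtain ⟨n, -, hn⟩ := hN
      exact ⟨n, hn⟩
    · rintro ⟨n, hn⟩
      exact ⟨n, hn.trans_le (le_partialSups (birkhoffSum T g) n x)⟩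
  have := tendsto_setIntegral_of_monotone hAm hAmono (hgi.integrableOn (s := ⋃ N, A N))
  rw [hAU] at this
  exact ge_of_tendsto' this fun N => hT.setIntegral_partialSups_birkhoffSum_pos_nonneg hg hgi N

end MaximalErgodic

section Ergodic

variable {X : Type*} [MeasurableSpace X] {μ : Measure X} [IsProbabilityMeasure μ] {T : X → X}
  {g : X → ℝ} {f : X → ℤ}

/-- The set where the Birkhoff sums are unbounded is invariant, hence null or conull; if it were
conull, the maximal ergodic theorem would force `0 ≤ ∫ g`. -/
theorem Ergodic.ae_bddAbove_range_birkhoffSum (hT : Ergodic T μ) (hg : Measurable g)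
    (hgi : Integrable g μ) (hneg : ∫ x, g x ∂μ < 0) :
    ∀ᵐ x ∂μ, BddAbove (Set.range fun n => birkhoffSum T g n x) := by
  set I := {x | BddAbove (Set.range fun n => birkhoffSum T g n x)}
  have hI : MeasurableSet I := measurableSet_bddAbove_range (hg.birkhoffSum hT.measurable)
  have hTI : T ⁻¹' Iᶜ = Iᶜ := by
    rw [Set.preimage_compl]
    exact congrArg _ (Set.ext fun x => bddAbove_range_birkhoffSum_apply_iff T g x)
  rcases hT.toPreErgodic.prob_eq_zero_or_one hI.compl hTI with h0 | h1
  · exact h0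
  · have hpos : ∀ᵐ x ∂μ, x ∈ {x | ∃ n, 0 < birkhoffSum T g n x} := by
      filter_upwards [mem_ae_iff.2 ((prob_compl_eq_zero_iff hI.compl).2 h1)] with x hx
      obtain ⟨_, ⟨n, rfl⟩, hn⟩ := not_bddAbove_iff.1 hx 0
      exact ⟨n, hn⟩
    have := hT.toMeasurePreserving.setIntegral_exists_birkhoffSum_pos_nonneg hg hgi
    rw [Measure.restrict_eq_self_of_ae_mem hpos] at this
    linarith

theorem Ergodic.ae_exists_birkhoffSum_le (hT : Ergodic T μ) (hg : Measurable g)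
    (hgi : Integrable g μ) {c : ℝ} (hc : ∫ x, g x ∂μ < c) :
    ∀ᵐ x ∂μ, ∃ M, ∀ n : ℕ, birkhoffSum T g n x ≤ n * c + M := by
  have hgc := hgi.sub (integrable_const c)
  filter_upwards [hT.ae_bddAbove_range_birkhoffSum (hg.sub measurable_const) hgc
    (by simpa [integral_sub hgi (integrable_const c)] using hc)] with x ⟨M, hM⟩
  refine ⟨M, fun n => ?_⟩
  have : birkhoffSum T (g - fun _ => c) n x ≤ M := hM ⟨n, rfl⟩
  rw [birkhoffSum_sub, birkhoffSum_of_comp_eq (φ := fun _ => c) rfl, Pi.smul_apply,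
    nsmul_eq_mul] at this
  linarith

theorem Ergodic.ae_exists_le_birkhoffSum (hT : Ergodic T μ) (hg : Measurable g)
    (hgi : Integrable g μ) {c : ℝ} (hc : c < ∫ x, g x ∂μ) :
    ∀ᵐ x ∂μ, ∃ M, ∀ n : ℕ, n * c - M ≤ birkhoffSum T g n x := by
  filter_upwards [hT.ae_exists_birkhoffSum_le hg.neg hgi.neg (c := -c)
    (by simpa [integral_neg] using neg_lt_neg hc)] with x ⟨M, hM⟩
  refine ⟨M, fun n => ?_⟩
  have := hM n
  rw [birkhoffSum_neg] at this
  linarith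

theorem Ergodic.ae_exists_abs_birkhoffSum_le (hT : Ergodic T μ) (hg : Measurable g)
    (hgi : Integrable g μ) (hg0 : ∫ x, g x ∂μ = 0) {δ : ℝ} (hδ : 0 < δ) :
    ∀ᵐ x ∂μ, ∃ M, ∀ n : ℕ, |birkhoffSum T g n x| ≤ n * δ + M := by
  filter_upwards [hT.ae_exists_birkhoffSum_le hg hgi (c := δ) (by linarith),
    hT.ae_exists_le_birkhoffSum hg hgi (c := -δ) (by linarith)] with x ⟨M₁, h₁⟩ ⟨M₂, h₂⟩
  refine ⟨M₁ ⊔ M₂, fun n => abs_le.2 ⟨?_, ?_⟩⟩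
  · linarith [h₂ n, le_sup_right (a := M₁) (b := M₂)]
  · linarith [h₁ n, le_sup_left (a := M₁) (b := M₂)]

theorem Ergodic.measure_eq_zero_of_forall_birkhoffSum_ne_zero (hT : Ergodic T μ)
    (hf : Measurable f) (hfi : Integrable (fun x => (f x : ℝ)) μ)
    (hf0 : ∫ x, (f x : ℝ) ∂μ = 0) {B : Set X} (hBm : MeasurableSet B)
    (hB : ∀ y ∈ B, ∀ n, 0 < n → T^[n] y ∈ B → birkhoffSum T f n y ≠ 0) : μ B = 0 := by
  classical
  by_contra hB0
  set b := μ.real B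
  have hb : 0 < b := ENNReal.toReal_pos hB0 (measure_ne_top μ B)
  obtain ⟨x, ⟨M, hM⟩, ⟨M', hM'⟩⟩ :=
    ((hT.ae_exists_abs_birkhoffSum_le (by fun_prop) hfi hf0 (δ := b / 8) (by positivity)).and
      (hT.ae_exists_le_birkhoffSum (measurable_one.indicator hBm)
        ((integrable_const 1).indicator hBm) (c := 3 * b / 4)
        (by rw [integral_indicator_one hBm]; linarith))).exists
  have hM0 : 0 ≤ M := by simpa using hM 0
  -- Before time `N` the orbit visits `B` at least `3bN/4 - M'` times, but the Birkhoff sums at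
  -- these times are distinct integers of absolute value at most `bN/8 + M`.
  obtain ⟨N, hN⟩ := exists_nat_gt ((M' + 2 * M + 3) / (b / 2))
  have hR : ∀ i < N, |birkhoffSum T f i x| ≤ ⌈N * (b / 8) + M⌉₊ := by
    intro i hi
    have : |((birkhoffSum T f i x : ℤ) : ℝ)| ≤ ⌈N * (b / 8) + M⌉₊ := calc
      _ = |birkhoffSum T (fun x => (f x : ℝ)) i x| := by simp [birkhoffSum]
      _ ≤ i * (b / 8) + M := hM i
      _ ≤ N * (b / 8) + M := by gcongr
      _ ≤ _ := Nat.le_ceil _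
    exact_mod_cast this
  have hcount : (#{i ∈ range N | T^[i] x ∈ B} : ℝ) ≤ 2 * ⌈N * (b / 8) + M⌉₊ + 1 := by
    exact_mod_cast card_filter_iterate_mem_le hB hR
  have hvisits := hM' N
  rw [birkhoffSum_indicator_one] at hvisits
  have hceil := Nat.ceil_lt_add_one (by positivity : 0 ≤ N * (b / 8) + M)
  rw [div_lt_iff₀ (by positivity)] at hN
  linarith

theorem Ergodic.ae_exists_iterate_mem_birkhoffSum_eq_zero (hT : Ergodic T μ)
    (hf : Measurable f) (hfi : Integrable (fun x => (f x : ℝ)) μ)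
    (hf0 : ∫ x, (f x : ℝ) ∂μ = 0) {A : Set X} (hA : MeasurableSet A) :
    ∀ᵐ x ∂μ, x ∈ A → ∃ n, 0 < n ∧ T^[n] x ∈ A ∧ birkhoffSum T f n x = 0 := by
  set B := {x | x ∈ A ∧ ∀ n, 0 < n → T^[n] x ∈ A → birkhoffSum T f n x ≠ 0}
  have hBm : MeasurableSet B := Measurable.setOf <| hA.mem.and <| .forall fun n =>
    .imp measurable_const <| .imp (hT.measurable.iterate n hA).mem
      (hf.birkhoffSum hT.measurable n (measurableSet_singleton 0)).mem.not
  suffices μ B = 0 by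
    filter_upwards [measure_eq_zero_iff_ae_notMem.1 this] with x hx hxA
    simpa [B, hxA] using hx
  exact hT.measure_eq_zero_of_forall_birkhoffSum_ne_zero hf hfi hf0 hBm
    fun y hy n hn hnB => hy.2 n hn hnB.1

end Ergodic

/-- The cylindrical cascade `C(x, z) = (S x, z + f(x))` over an ergodic invertible
measure-preserving transformation `S` of a probability space, with integrable
zero-mean cocycle `f : X → ℤ`, is conservative on `X × ℤ` with the measure
`μ × #` (`#` = counting measure): almost every point of any set of positive
measure returns to the set under a positive iterate. -/
theorem cylindrical_cascade_conservative {X : Type*} [MeasurableSpace X]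
    (μ : Measure X) [IsProbabilityMeasure μ]
    (S : X ≃ᵐ X) (hS : Ergodic (⇑S) μ)
    (f : X → ℤ) (hf : Measurable f)
    (hfi : Integrable (fun x => (f x : ℝ)) μ)
    (hf0 : ∫ x, (f x : ℝ) ∂μ = 0)
    (C : X × ℤ → X × ℤ) (hC : ∀ p : X × ℤ, C p = (S p.1, p.2 + f p.1)) :
    ∀ E : Set (X × ℤ), MeasurableSet E →
      0 < (μ.prod (Measure.count : Measure ℤ)) E →
      ∀ᵐ p ∂(μ.prod (Measure.count : Measure ℤ)),
        p ∈ E → ∃ n : ℕ, 0 < n ∧ C^[n] p ∈ E := by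
  intro E hE _
  obtain rfl : C = skewProduct S f := funext hC
  refine Measure.ae_prod_of_forall_ae_of_countable fun z => ?_
  filter_upwards [hS.ae_exists_iterate_mem_birkhoffSum_eq_zero hf hfi hf0
    (measurable_prodMk_right hE)] with x hx hxE
  obtain ⟨n, hn, hnE, hsum⟩ := hx hxE
  exact ⟨n, hn, by rwa [skewProduct_iterate, hsum, add_zero]⟩
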